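/- If f_{e1} : X₁ → ℂ(i₁) and f_{e2} : X₂ → ℂ(i₁) are holomorphic functions on domains X₁ and X₂ of ℂ(i₁) respectively, then the function f : X₁ ×_e X₂ → 𝕋 defined by f(z₁ + z₂i₂) = f_{e1}(z₁ − z₂i₁)e₁ + f_{e2}(z₁ + z₂i₁)e₂ is 𝕋-holomorphic on the domain X₁ ×_e X₂, and f′(z₁ + z₂i₂) = f′_{e1}(z₁ − z₂i₁)e₁ + f′_{e2}(z₁ + z₂i₁)e₂ for all z₁ + z₂i₂ ∈ X₁ ×_e X₂. -/

import Mathlib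

noncomputable section

open Complex Filter Topology

/-- The bicomplex numbers `𝕋 = {z₁ + z₂ i₂ : z₁, z₂ ∈ ℂ(i₁)}`, represented by the pair
of `ℂ(i₁)`-components `(z₁, z₂)`. -/
@[ext] structure Bicomplex : Type where
  z1 : ℂ
  z2 : ℂ

namespace Bicomplex

instance : Zero Bicomplex := ⟨⟨0, 0⟩⟩
instance : One Bicomplex := ⟨⟨1, 0⟩⟩
instance : Add Bicomplex := ⟨fun w v => ⟨w.z1 + v.z1, w.z2 + v.z2⟩⟩
instance : Neg Bicomplex := ⟨fun w => ⟨-w.z1, -w.z2⟩⟩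
instance : Mul Bicomplex := ⟨fun w v => ⟨w.z1 * v.z1 - w.z2 * v.z2, w.z1 * v.z2 + w.z2 * v.z1⟩⟩

@[simp] lemma zero_z1 : (0 : Bicomplex).z1 = 0 := rfl
@[simp] lemma zero_z2 : (0 : Bicomplex).z2 = 0 := rfl
@[simp] lemma one_z1 : (1 : Bicomplex).z1 = 1 := rfl
@[simp] lemma one_z2 : (1 : Bicomplex).z2 = 0 := rfl
@[simp] lemma add_z1 (w v : Bicomplex) : (w + v).z1 = w.z1 + v.z1 := rfl
@[simp] lemma add_z2 (w v : Bicomplex) : (w + v).z2 = w.z2 + v.z2 := rfl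
@[simp] lemma neg_z1 (w : Bicomplex) : (-w).z1 = -w.z1 := rfl
@[simp] lemma neg_z2 (w : Bicomplex) : (-w).z2 = -w.z2 := rfl
@[simp] lemma mul_z1 (w v : Bicomplex) : (w * v).z1 = w.z1 * v.z1 - w.z2 * v.z2 := rfl
@[simp] lemma mul_z2 (w v : Bicomplex) : (w * v).z2 = w.z1 * v.z2 + w.z2 * v.z1 := rfl

/-- The bicomplex numbers form a commutative ring. -/
instance : CommRing Bicomplex where
  nsmul n w := ⟨n • w.z1, n • w.z2⟩
  zsmul n w := ⟨n • w.z1, n • w.z2⟩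
  nsmul_zero a := by ext <;> exact zero_nsmul _
  nsmul_succ n a := by ext <;> exact succ_nsmul _ n
  zsmul_zero' a := by ext <;> exact zero_zsmul _
  zsmul_succ' n a := by ext <;> exact SubNegMonoid.zsmul_succ' n _
  zsmul_neg' n a := by ext <;> exact SubNegMonoid.zsmul_neg' n _
  add_assoc a b c := by ext <;> simp <;> ring
  zero_add a := by ext <;> simp
  add_zero a := by ext <;> simp
  add_comm a b := by ext <;> simp <;> ring
  neg_add_cancel a := by ext <;> simp
  mul_assoc a b c := by ext <;> simp <;> ring
  one_mul a := by ext <;> simp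
  mul_one a := by ext <;> simp
  left_distrib a b c := by ext <;> simp <;> ring
  right_distrib a b c := by ext <;> simp <;> ring
  zero_mul a := by ext <;> simp
  mul_zero a := by ext <;> simp
  mul_comm a b := by ext <;> simp <;> ring

/-- Inverse: `w⁻¹ = w†₂ / (z₁² + z₂²)` (junk value `0/0` on the null-cone). -/
instance : Inv Bicomplex :=
  ⟨fun w => ⟨w.z1 / (w.z1 ^ 2 + w.z2 ^ 2), -w.z2 / (w.z1 ^ 2 + w.z2 ^ 2)⟩⟩

instance : Div Bicomplex := ⟨fun w v => w * v⁻¹⟩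

/-- Embedding of `ℂ(i₁)` into `𝕋`. -/
def ofComplex (c : ℂ) : Bicomplex := ⟨c, 0⟩

/-- Embedding of `ℝ` into `𝕋`. -/
def ofReal (t : ℝ) : Bicomplex := ⟨(t : ℂ), 0⟩

/-- The imaginary unit `i₁`. -/
def i1 : Bicomplex := ⟨Complex.I, 0⟩

/-- The imaginary unit `i₂`. -/
def i2 : Bicomplex := ⟨0, 1⟩

/-- The hyperbolic unit `j = i₁ i₂`. -/
def jj : Bicomplex := ⟨0, Complex.I⟩

/-- The idempotent `e₁ = (1 + j)/2`. -/
def e1 : Bicomplex := ⟨1 / 2, Complex.I / 2⟩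

/-- The idempotent `e₂ = (1 - j)/2`. -/
def e2 : Bicomplex := ⟨1 / 2, -(Complex.I) / 2⟩

/-- The projection `P₁(z₁ + z₂ i₂) = z₁ - z₂ i₁`. -/
def P1 (w : Bicomplex) : ℂ := w.z1 - w.z2 * Complex.I

/-- The projection `P₂(z₁ + z₂ i₂) = z₁ + z₂ i₁`. -/
def P2 (w : Bicomplex) : ℂ := w.z1 + w.z2 * Complex.I

/-- The conjugation `w†₁ = z̄₁ + z̄₂ i₂`. -/
def dag1 (w : Bicomplex) : Bicomplex := ⟨(starRingEnd ℂ) w.z1, (starRingEnd ℂ) w.z2⟩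

/-- The conjugation `w†₂ = z₁ - z₂ i₂`. -/
def dag2 (w : Bicomplex) : Bicomplex := ⟨w.z1, -w.z2⟩

/-- The conjugation `w†₃ = z̄₁ - z̄₂ i₂`. -/
def dag3 (w : Bicomplex) : Bicomplex := ⟨(starRingEnd ℂ) w.z1, -((starRingEnd ℂ) w.z2)⟩

/-- `𝕋` as `ℂ × ℂ`. -/
def toProd (w : Bicomplex) : ℂ × ℂ := (w.z1, w.z2)

/-- `ℂ × ℂ` as `𝕋`. -/
def ofProd (p : ℂ × ℂ) : Bicomplex := ⟨p.1, p.2⟩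

instance : TopologicalSpace Bicomplex := TopologicalSpace.induced toProd inferInstance

/-- The set of points `w` such that `w - w₀` is invertible (i.e. not a zero divisor). -/
def invertibleDiff (w₀ : Bicomplex) : Set Bicomplex :=
  {w | (w - w₀).z1 ^ 2 + (w - w₀).z2 ^ 2 ≠ 0}

/-- `f` is `𝕋`-differentiable at `w₀` with derivative `d`:
`(f w - f w₀)/(w - w₀) → d` as `w → w₀` with `w - w₀` invertible. -/
def HasTDerivAt (f : Bicomplex → Bicomplex) (d w₀ : Bicomplex) : Prop :=
  Tendsto (fun w => (f w - f w₀) / (w - w₀)) (𝓝[invertibleDiff w₀] w₀) (𝓝 d)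

/-- `f` is `𝕋`-holomorphic on `U` if it is `𝕋`-differentiable at each point of `U`. -/
def THolomorphicOn (f : Bicomplex → Bicomplex) (U : Set Bicomplex) : Prop :=
  ∀ w ∈ U, ∃ d, HasTDerivAt f d w

/-- `f` viewed as a map `ℂ² → ℂ²`. -/
def fProd (f : Bicomplex → Bicomplex) : ℂ × ℂ → ℂ × ℂ := fun p => toProd (f (ofProd p))

/-- `f : 𝕋 → 𝕋` is `n` times continuously (real-)differentiable on `U`. -/
def TContDiffOn (n : ℕ∞) (f : Bicomplex → Bicomplex) (U : Set Bicomplex) : Prop :=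
  ContDiffOn ℝ n (fProd f) (toProd '' U)

/-- `g : 𝕋 → ℂ` is `n` times continuously (real-)differentiable on `U`. -/
def CContDiffOn (n : ℕ∞) (g : Bicomplex → ℂ) (U : Set Bicomplex) : Prop :=
  ContDiffOn ℝ n (fun p => g (ofProd p)) (toProd '' U)

/-- Real partial derivative of `g : 𝕋 → ℂ` at `w` in direction `e`. -/
def pd (e : Bicomplex) (g : Bicomplex → ℂ) (w : Bicomplex) : ℂ :=
  deriv (fun t : ℝ => g (w + ofReal t * e)) 0

/-- Existence of the real partial derivative of `g : 𝕋 → ℂ` at `w` in direction `e`. -/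
def pdExists (e : Bicomplex) (g : Bicomplex → ℂ) (w : Bicomplex) : Prop :=
  DifferentiableAt ℝ (fun t : ℝ => g (w + ofReal t * e)) 0

/-- The scalar (`ℂ(i₁)`-) component `f₁` of `f = f₁ + f₂ i₂`. -/
def s1 (f : Bicomplex → Bicomplex) : Bicomplex → ℂ := fun w => (f w).z1

/-- The vectorial (`ℂ(i₁)`-) component `f₂` of `f = f₁ + f₂ i₂`. -/
def s2 (f : Bicomplex → Bicomplex) : Bicomplex → ℂ := fun w => (f w).z2

/-- Real partial derivative of `f : 𝕋 → 𝕋` in direction `e`. -/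
def pdT (e : Bicomplex) (f : Bicomplex → Bicomplex) : Bicomplex → Bicomplex :=
  fun w => ⟨pd e (s1 f) w, pd e (s2 f) w⟩

/-- Existence of the real partial derivative of `f : 𝕋 → 𝕋` in direction `e`. -/
def pdTExists (e : Bicomplex) (f : Bicomplex → Bicomplex) (w : Bicomplex) : Prop :=
  pdExists e (s1 f) w ∧ pdExists e (s2 f) w

/-- `∂_{z₁} g = ½(∂ₓ g - i₁ ∂_y g)` for `g : 𝕋 → ℂ`. -/
def dz1 (g : Bicomplex → ℂ) : Bicomplex → ℂ :=
  fun w => (pd 1 g w - Complex.I * pd i1 g w) / 2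

/-- `∂_{z̄₁} g = ½(∂ₓ g + i₁ ∂_y g)` for `g : 𝕋 → ℂ`. -/
def dz1bar (g : Bicomplex → ℂ) : Bicomplex → ℂ :=
  fun w => (pd 1 g w + Complex.I * pd i1 g w) / 2

/-- `∂_{z₂} g = ½(∂_p g - i₁ ∂_q g)` for `g : 𝕋 → ℂ`. -/
def dz2 (g : Bicomplex → ℂ) : Bicomplex → ℂ :=
  fun w => (pd i2 g w - Complex.I * pd jj g w) / 2

/-- `∂_{z̄₂} g = ½(∂_p g + i₁ ∂_q g)` for `g : 𝕋 → ℂ`. -/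
def dz2bar (g : Bicomplex → ℂ) : Bicomplex → ℂ :=
  fun w => (pd i2 g w + Complex.I * pd jj g w) / 2

/-- `∂_{z₁}` applied componentwise to `f : 𝕋 → 𝕋`. -/
def dZ1 (f : Bicomplex → Bicomplex) : Bicomplex → Bicomplex :=
  fun w => ⟨dz1 (s1 f) w, dz1 (s2 f) w⟩

/-- `∂_{z₂}` applied componentwise to `f : 𝕋 → 𝕋`. -/
def dZ2 (f : Bicomplex → Bicomplex) : Bicomplex → Bicomplex :=
  fun w => ⟨dz2 (s1 f) w, dz2 (s2 f) w⟩

/-- `∂_{z̄₁}` applied componentwise to `f : 𝕋 → 𝕋`. -/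
def dZ1bar (f : Bicomplex → Bicomplex) : Bicomplex → Bicomplex :=
  fun w => ⟨dz1bar (s1 f) w, dz1bar (s2 f) w⟩

/-- `∂_{z̄₂}` applied componentwise to `f : 𝕋 → 𝕋`. -/
def dZ2bar (f : Bicomplex → Bicomplex) : Bicomplex → Bicomplex :=
  fun w => ⟨dz2bar (s1 f) w, dz2bar (s2 f) w⟩

/-- `∂_ω = ½(∂_{z₁} - i₂ ∂_{z₂})`. -/
def dOm (f : Bicomplex → Bicomplex) : Bicomplex → Bicomplex :=
  fun w => ofComplex (1 / 2) * (dZ1 f w - i2 * dZ2 f w)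

/-- `∂_{ω†₂} = ∂_ω̄ = ½(∂_{z₁} + i₂ ∂_{z₂})`. -/
def dOmBar (f : Bicomplex → Bicomplex) : Bicomplex → Bicomplex :=
  fun w => ofComplex (1 / 2) * (dZ1 f w + i2 * dZ2 f w)

/-- `∂_{ω†₁} = ½(∂_{z̄₁} - i₂ ∂_{z̄₂})`. -/
def dOmDag1 (f : Bicomplex → Bicomplex) : Bicomplex → Bicomplex :=
  fun w => ofComplex (1 / 2) * (dZ1bar f w - i2 * dZ2bar f w)

/-- `∂_{ω†₃} = ½(∂_{z̄₁} + i₂ ∂_{z̄₂})`. -/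
def dOmDag3 (f : Bicomplex → Bicomplex) : Bicomplex → Bicomplex :=
  fun w => ofComplex (1 / 2) * (dZ1bar f w + i2 * dZ2bar f w)

/-- The complexified Laplacian `Δ_ℂ = ∂²_{z₁} + ∂²_{z₂}` acting on `ℂ(i₁)`-valued functions. -/
def lapC (g : Bicomplex → ℂ) : Bicomplex → ℂ :=
  fun w => dz1 (dz1 g) w + dz2 (dz2 g) w

/-- The vector part in the `i₂`-representation `w = ζ₁ + ζ₂ i₁` with `ζ₁, ζ₂ ∈ ℂ(i₂)`:
for `w = x₁ + x₂i₁ + x₃i₂ + x₄j`, `Vec(w) = x₂ + x₄ i₂`, encoded as the complex number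
`x₂ + x₄ i`. -/
def vec2 (w : Bicomplex) : ℂ := ⟨w.z1.im, w.z2.im⟩

/-- Embedding of `ℂ(i₂)` into `𝕋`: the complex number `a + b i` represents `a + b i₂`. -/
def ofC2 (c : ℂ) : Bicomplex := ⟨(c.re : ℂ), (c.im : ℂ)⟩

/-- Multiplication of hyperbolic numbers `ℂ(j) = {x + yj}`, encoded as pairs in `ℝ × ℝ`. -/
def hmul (a b : ℝ × ℝ) : ℝ × ℝ := (a.1 * b.1 + a.2 * b.2, a.1 * b.2 + a.2 * b.1)

/-- Division of hyperbolic numbers (junk value when the denominator is a zero divisor). -/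
def hdiv (a b : ℝ × ℝ) : ℝ × ℝ :=
  hmul a (b.1 / (b.1 ^ 2 - b.2 ^ 2), -b.2 / (b.1 ^ 2 - b.2 ^ 2))

/-- Embedding of the hyperbolic numbers `ℂ(j)` into `𝕋`: `(x, y) ↦ x + y j`. -/
def ofHyp (a : ℝ × ℝ) : Bicomplex := ⟨(a.1 : ℂ), (a.2 : ℂ) * Complex.I⟩

/-- The vector part in the `j`-representation `w = ζ₁ + ζ₂ i₁` with `ζ₁, ζ₂ ∈ ℂ(j)`:
for `w = x₁ + x₂i₁ + x₃i₂ + x₄j`, `Vec(w) = x₂ - x₃ j`, encoded as the pair `(x₂, -x₃)`. -/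
def vec3 (w : Bicomplex) : ℝ × ℝ := (w.z1.im, -w.z2.re)

/-- The `𝕋`-cartesian set `X₁ ×ₑ X₂ = {w : P₁ w ∈ X₁ ∧ P₂ w ∈ X₂}`. -/
def eProd (X₁ X₂ : Set ℂ) : Set Bicomplex := {w | P1 w ∈ X₁ ∧ P2 w ∈ X₂}

/-- `(F, G)` is an `i₁`-generating pair on `D`. -/
def GenPair1 (F G : Bicomplex → Bicomplex) (D : Set Bicomplex) : Prop :=
  TContDiffOn 2 F D ∧ TContDiffOn 2 G D ∧ ∀ w ∈ D, (dag2 (F w) * G w).z2 ≠ 0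

/-- `(F, G)` is an `i₂`-generating pair on `D`. -/
def GenPair2 (F G : Bicomplex → Bicomplex) (D : Set Bicomplex) : Prop :=
  TContDiffOn 2 F D ∧ TContDiffOn 2 G D ∧ ∀ w ∈ D, vec2 (dag1 (F w) * G w) ≠ 0

/-- `(F, G)` is a `j`-generating pair on `D`. -/
def GenPairJ (F G : Bicomplex → Bicomplex) (D : Set Bicomplex) : Prop :=
  TContDiffOn 2 F D ∧ TContDiffOn 2 G D ∧ ∀ w ∈ D, vec3 (dag3 (F w) * G w) ≠ 0

/-- The unique `λ₀ ∈ ℂ(i₁)` with `w(ω₀) = λ₀ F(ω₀) + μ₀ G(ω₀)`. -/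
def lam1 (F G wf : Bicomplex → Bicomplex) (ω₀ : Bicomplex) : ℂ :=
  (dag2 (wf ω₀) * G ω₀).z2 / (dag2 (F ω₀) * G ω₀).z2

/-- The unique `μ₀ ∈ ℂ(i₁)` with `w(ω₀) = λ₀ F(ω₀) + μ₀ G(ω₀)`. -/
def mu1 (F G wf : Bicomplex → Bicomplex) (ω₀ : Bicomplex) : ℂ :=
  -((dag2 (wf ω₀) * F ω₀).z2 / (dag2 (F ω₀) * G ω₀).z2)

/-- `w` has `(F,G)_{i₁}`-derivative `d` at `ω₀`. -/
def HasFGDeriv1 (F G wf : Bicomplex → Bicomplex) (d ω₀ : Bicomplex) : Prop :=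
  Tendsto
    (fun ω => (wf ω - ofComplex (lam1 F G wf ω₀) * F ω - ofComplex (mu1 F G wf ω₀) * G ω)
        / (ω - ω₀))
    (𝓝[invertibleDiff ω₀] ω₀) (𝓝 d)

/-- The unique `λ₀ ∈ ℂ(j)` with `w(ω₀) = λ₀ F(ω₀) + μ₀ G(ω₀)`. -/
def lamJ (F G wf : Bicomplex → Bicomplex) (ω₀ : Bicomplex) : ℝ × ℝ :=
  hdiv (vec3 (dag3 (wf ω₀) * G ω₀)) (vec3 (dag3 (F ω₀) * G ω₀))

/-- The unique `μ₀ ∈ ℂ(j)` with `w(ω₀) = λ₀ F(ω₀) + μ₀ G(ω₀)`. -/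
def muJ (F G wf : Bicomplex → Bicomplex) (ω₀ : Bicomplex) : ℝ × ℝ :=
  -(hdiv (vec3 (dag3 (wf ω₀) * F ω₀)) (vec3 (dag3 (F ω₀) * G ω₀)))

/-- `w` has `(F,G)_j`-derivative `d` at `ω₀`. -/
def HasFGDerivJ (F G wf : Bicomplex → Bicomplex) (d ω₀ : Bicomplex) : Prop :=
  Tendsto
    (fun ω => (wf ω - ofHyp (lamJ F G wf ω₀) * F ω - ofHyp (muJ F G wf ω₀) * G ω) / (ω - ω₀))
    (𝓝[invertibleDiff ω₀] ω₀) (𝓝 d)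

/-- `w` is `(F,G)_j`-pseudoanalytic on `D`. -/
def PseudoanalyticJ (F G wf : Bicomplex → Bicomplex) (D : Set Bicomplex) : Prop :=
  ∀ ω ∈ D, ∃ d, HasFGDerivJ F G wf d ω

/-- `w` has continuous partial derivatives in a neighborhood of `ω₀`. -/
def HasContPartialsNear (f : Bicomplex → Bicomplex) (w₀ : Bicomplex) : Prop :=
  ∃ V ∈ 𝓝 w₀, ∀ e ∈ ({1, i1, i2, jj} : Set Bicomplex),
    (∀ w ∈ V, pdTExists e f w) ∧ ContinuousOn (pdT e f) V

/-! Characteristic coefficients with respect to the `†₂` conjugation (`i₁` case). -/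

def denom2 (F G : Bicomplex → Bicomplex) (w : Bicomplex) : Bicomplex :=
  F w * dag2 (G w) - dag2 (F w) * G w

def aCoef2₁ (F G : Bicomplex → Bicomplex) (w : Bicomplex) : Bicomplex :=
  -((dag1 (F w) * dOmDag1 G w - dOmDag1 F w * dag1 (G w)) / denom2 F G w)

def bCoef2₁ (F G : Bicomplex → Bicomplex) (w : Bicomplex) : Bicomplex :=
  (F w * dOmDag1 G w - dOmDag1 F w * G w) / denom2 F G w

def aCoef2₂ (F G : Bicomplex → Bicomplex) (w : Bicomplex) : Bicomplex :=
  -((dag2 (F w) * dOmBar G w - dOmBar F w * dag2 (G w)) / denom2 F G w)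

def bCoef2₂ (F G : Bicomplex → Bicomplex) (w : Bicomplex) : Bicomplex :=
  (F w * dOmBar G w - dOmBar F w * G w) / denom2 F G w

def aCoef2₃ (F G : Bicomplex → Bicomplex) (w : Bicomplex) : Bicomplex :=
  -((dag3 (F w) * dOmDag3 G w - dOmDag3 F w * dag3 (G w)) / denom2 F G w)

def bCoef2₃ (F G : Bicomplex → Bicomplex) (w : Bicomplex) : Bicomplex :=
  (F w * dOmDag3 G w - dOmDag3 F w * G w) / denom2 F G w

def Acoef2 (F G : Bicomplex → Bicomplex) (w : Bicomplex) : Bicomplex :=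
  -((dag2 (F w) * dOm G w - dOm F w * dag2 (G w)) / denom2 F G w)

def Bcoef2 (F G : Bicomplex → Bicomplex) (w : Bicomplex) : Bicomplex :=
  (F w * dOm G w - dOm F w * G w) / denom2 F G w

/-! Characteristic coefficients with respect to the `†₃` conjugation (`j` case). -/

def denom3 (F G : Bicomplex → Bicomplex) (w : Bicomplex) : Bicomplex :=
  F w * dag3 (G w) - dag3 (F w) * G w

def aCoef3₁ (F G : Bicomplex → Bicomplex) (w : Bicomplex) : Bicomplex :=
  -((dag1 (F w) * dOmDag1 G w - dOmDag1 F w * dag1 (G w)) / denom3 F G w)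

def bCoef3₁ (F G : Bicomplex → Bicomplex) (w : Bicomplex) : Bicomplex :=
  (F w * dOmDag1 G w - dOmDag1 F w * G w) / denom3 F G w

def aCoef3₂ (F G : Bicomplex → Bicomplex) (w : Bicomplex) : Bicomplex :=
  -((dag2 (F w) * dOmBar G w - dOmBar F w * dag2 (G w)) / denom3 F G w)

def bCoef3₂ (F G : Bicomplex → Bicomplex) (w : Bicomplex) : Bicomplex :=
  (F w * dOmBar G w - dOmBar F w * G w) / denom3 F G w

def aCoef3₃ (F G : Bicomplex → Bicomplex) (w : Bicomplex) : Bicomplex :=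
  -((dag3 (F w) * dOmDag3 G w - dOmDag3 F w * dag3 (G w)) / denom3 F G w)

def bCoef3₃ (F G : Bicomplex → Bicomplex) (w : Bicomplex) : Bicomplex :=
  (F w * dOmDag3 G w - dOmDag3 F w * G w) / denom3 F G w

def Acoef3 (F G : Bicomplex → Bicomplex) (w : Bicomplex) : Bicomplex :=
  -((dag3 (F w) * dOm G w - dOm F w * dag3 (G w)) / denom3 F G w)

def Bcoef3 (F G : Bicomplex → Bicomplex) (w : Bicomplex) : Bicomplex :=
  (F w * dOm G w - dOm F w * G w) / denom3 F G w

/-! Classical (Bers) pseudoanalytic function theory in `ℂ(i₁)`. -/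

/-- A complex (in `i₁`) generating pair on `D ⊆ ℂ(i₁)`. -/
def ComplexGenPair (Fe Ge : ℂ → ℂ) (D : Set ℂ) : Prop :=
  ContDiffOn ℝ 2 Fe D ∧ ContDiffOn ℝ 2 Ge D ∧
    ∀ z ∈ D, ((starRingEnd ℂ) (Fe z) * Ge z).im ≠ 0

/-- The unique real `λ₀` with `w(z₀) = λ₀ F(z₀) + μ₀ G(z₀)`. -/
def lamBers (Fe Ge we : ℂ → ℂ) (z₀ : ℂ) : ℝ :=
  ((starRingEnd ℂ) (we z₀) * Ge z₀).im / ((starRingEnd ℂ) (Fe z₀) * Ge z₀).im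

/-- The unique real `μ₀` with `w(z₀) = λ₀ F(z₀) + μ₀ G(z₀)`. -/
def muBers (Fe Ge we : ℂ → ℂ) (z₀ : ℂ) : ℝ :=
  -(((starRingEnd ℂ) (we z₀) * Fe z₀).im / ((starRingEnd ℂ) (Fe z₀) * Ge z₀).im)

/-- `w_e` has Bers `(F_e,G_e)`-derivative `d` at `z₀`. -/
def HasBersDerivAt (Fe Ge we : ℂ → ℂ) (d z₀ : ℂ) : Prop :=
  Tendsto
    (fun z => (we z - (lamBers Fe Ge we z₀ : ℂ) * Fe z - (muBers Fe Ge we z₀ : ℂ) * Ge z)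
        / (z - z₀))
    (𝓝[≠] z₀) (𝓝 d)

/-- `w_e` is `(F_e,G_e)`-pseudoanalytic (in the sense of Bers) on `D`. -/
def BersPseudoanalyticOn (Fe Ge we : ℂ → ℂ) (D : Set ℂ) : Prop :=
  ∀ z ∈ D, ∃ d, HasBersDerivAt Fe Ge we d z

/-- `∂_z̄ = ½(∂ₓ + i ∂_y)` for functions `ℂ(i₁) → ℂ(i₁)`. -/
def dzbarC (g : ℂ → ℂ) (z : ℂ) : ℂ :=
  (deriv (fun t : ℝ => g (z + t)) 0 + Complex.I * deriv (fun t : ℝ => g (z + t * Complex.I)) 0) / 2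

/-- The Bers characteristic coefficient `a_{(F_e,G_e)}`. -/
def aBers (Fe Ge : ℂ → ℂ) (z : ℂ) : ℂ :=
  -(((starRingEnd ℂ) (Fe z) * dzbarC Ge z - dzbarC Fe z * (starRingEnd ℂ) (Ge z)) /
    (Fe z * (starRingEnd ℂ) (Ge z) - (starRingEnd ℂ) (Fe z) * Ge z))

/-- The Bers characteristic coefficient `b_{(F_e,G_e)}`. -/
def bBers (Fe Ge : ℂ → ℂ) (z : ℂ) : ℂ :=
  (Fe z * dzbarC Ge z - dzbarC Fe z * Ge z) /
    (Fe z * (starRingEnd ℂ) (Ge z) - (starRingEnd ℂ) (Fe z) * Ge z)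

/-- `(F, G)` is the `i₂e`-generating pair associated to complex generating pairs
`(F_{e1}, G_{e1})` on `D₁` and `(F_{e2}, G_{e2})` on `D₂`. -/
def I2eGenPair (Fe1 Ge1 Fe2 Ge2 : ℂ → ℂ) (D₁ D₂ : Set ℂ)
    (F G : Bicomplex → Bicomplex) : Prop :=
  ComplexGenPair Fe1 Ge1 D₁ ∧ ComplexGenPair Fe2 Ge2 D₂ ∧
  (∀ w, F w = ofComplex (Fe1 (P1 w)) * e1 + ofComplex (Fe2 (P2 w)) * e2) ∧
  (∀ w, G w = ofComplex (Ge1 (P1 w)) * e1 + ofComplex (Ge2 (P2 w)) * e2)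

end Bicomplex

open Bicomplex

/-!
The projections `P1`, `P2` onto the idempotent components form a ring isomorphism
`𝕋 ≃ ℂ × ℂ` that is also a homeomorphism, and `w - w₀` is invertible exactly when both
`P1 w ≠ P1 w₀` and `P2 w ≠ P2 w₀`. Hence the `𝕋`-difference quotient of `f` has the complex
difference quotients of `f_{e1}` and `f_{e2}` as its components, and converges componentwise.
-/

namespace Bicomplex

def ofIdempotent (c₁ c₂ : ℂ) : Bicomplex := ofComplex c₁ * e1 + ofComplex c₂ * e2

@[simp] lemma sub_z1 (w v : Bicomplex) : (w - v).z1 = w.z1 - v.z1 := by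
  simp [sub_eq_add_neg]

@[simp] lemma sub_z2 (w v : Bicomplex) : (w - v).z2 = w.z2 - v.z2 := by
  simp [sub_eq_add_neg]

lemma P1_sub (w v : Bicomplex) : P1 (w - v) = P1 w - P1 v := by
  simp only [P1, sub_z1, sub_z2]; ring

lemma P2_sub (w v : Bicomplex) : P2 (w - v) = P2 w - P2 v := by
  simp only [P2, sub_z1, sub_z2]; ring

lemma P1_mul (w v : Bicomplex) : P1 (w * v) = P1 w * P1 v := by
  simp only [P1, mul_z1, mul_z2]
  linear_combination (-(w.z2 * v.z2)) * I_mul_I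

lemma P2_mul (w v : Bicomplex) : P2 (w * v) = P2 w * P2 v := by
  simp only [P2, mul_z1, mul_z2]
  linear_combination (-(w.z2 * v.z2)) * I_mul_I

lemma P1_mul_P2 (w : Bicomplex) : P1 w * P2 w = w.z1 ^ 2 + w.z2 ^ 2 := by
  simp only [P1, P2]
  linear_combination (-(w.z2 ^ 2)) * I_mul_I

lemma P1_ofIdempotent (c₁ c₂ : ℂ) : P1 (ofIdempotent c₁ c₂) = c₁ := by
  simp only [ofIdempotent, P1, ofComplex, e1, e2, mul_z1, mul_z2, add_z1, add_z2]
  linear_combination ((c₂ - c₁) / 2) * I_mul_I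

lemma P2_ofIdempotent (c₁ c₂ : ℂ) : P2 (ofIdempotent c₁ c₂) = c₂ := by
  simp only [ofIdempotent, P2, ofComplex, e1, e2, mul_z1, mul_z2, add_z1, add_z2]
  linear_combination ((c₁ - c₂) / 2) * I_mul_I

lemma mul_inv_cancel_of_sum_sq_ne_zero {v : Bicomplex} (hv : v.z1 ^ 2 + v.z2 ^ 2 ≠ 0) :
    v * v⁻¹ = 1 := by
  ext
  · change v.z1 * (v.z1 / _) - v.z2 * (-v.z2 / _) = 1
    field_simp
    ring
  · change v.z1 * (-v.z2 / _) + v.z2 * (v.z1 / _) = 0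
    ring

lemma P1_div (u : Bicomplex) {v : Bicomplex} (hv : v.z1 ^ 2 + v.z2 ^ 2 ≠ 0) :
    P1 (u / v) = P1 u / P1 v := by
  have hinv : P1 v * P1 v⁻¹ = 1 := by
    rw [← P1_mul, mul_inv_cancel_of_sum_sq_ne_zero hv]
    simp [P1]
  rw [show u / v = u * v⁻¹ from rfl, P1_mul, eq_inv_of_mul_eq_one_right hinv, div_eq_mul_inv]

lemma P2_div (u : Bicomplex) {v : Bicomplex} (hv : v.z1 ^ 2 + v.z2 ^ 2 ≠ 0) :
    P2 (u / v) = P2 u / P2 v := by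
  have hinv : P2 v * P2 v⁻¹ = 1 := by
    rw [← P2_mul, mul_inv_cancel_of_sum_sq_ne_zero hv]
    simp [P2]
  rw [show u / v = u * v⁻¹ from rfl, P2_mul, eq_inv_of_mul_eq_one_right hinv, div_eq_mul_inv]

lemma mem_invertibleDiff_iff {w w₀ : Bicomplex} :
    w ∈ invertibleDiff w₀ ↔ P1 w ≠ P1 w₀ ∧ P2 w ≠ P2 w₀ := by
  rw [invertibleDiff, Set.mem_ofPred_eq, ← P1_mul_P2, P1_sub, P2_sub, mul_ne_zero_iff,
    sub_ne_zero, sub_ne_zero]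

lemma P1_sub_div_sub {w w₀ : Bicomplex} (hw : w ∈ invertibleDiff w₀) (u u₀ : Bicomplex) :
    P1 ((u - u₀) / (w - w₀)) = (P1 u - P1 u₀) / (P1 w - P1 w₀) := by
  rw [P1_div _ hw, P1_sub, P1_sub]

lemma P2_sub_div_sub {w w₀ : Bicomplex} (hw : w ∈ invertibleDiff w₀) (u u₀ : Bicomplex) :
    P2 ((u - u₀) / (w - w₀)) = (P2 u - P2 u₀) / (P2 w - P2 w₀) := by
  rw [P2_div _ hw, P2_sub, P2_sub]

lemma continuous_z1 : Continuous z1 :=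
  continuous_fst.comp (continuous_induced_dom : Continuous toProd)

lemma continuous_z2 : Continuous z2 :=
  continuous_snd.comp (continuous_induced_dom : Continuous toProd)

lemma continuous_P1 : Continuous P1 := continuous_z1.sub (continuous_z2.mul continuous_const)

lemma continuous_P2 : Continuous P2 := continuous_z1.add (continuous_z2.mul continuous_const)

lemma tendsto_of_tendsto_P1_P2 {α : Type*} {g : α → Bicomplex} {l : Filter α} {d : Bicomplex}
    (h₁ : Tendsto (fun a => P1 (g a)) l (𝓝 (P1 d)))
    (h₂ : Tendsto (fun a => P2 (g a)) l (𝓝 (P2 d))) :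
    Tendsto g l (𝓝 d) := by
  have hz1 : ∀ w : Bicomplex, w.z1 = (P1 w + P2 w) / 2 := fun w => by
    simp only [P1, P2]; ring
  have hz2 : ∀ w : Bicomplex, w.z2 = (P2 w - P1 w) * (-I) / 2 := fun w => by
    simp only [P1, P2]
    linear_combination w.z2 * I_mul_I
  have t1 : Tendsto (fun a => (g a).z1) l (𝓝 d.z1) := by
    simpa only [← hz1] using (h₁.add h₂).div_const 2
  have t2 : Tendsto (fun a => (g a).z2) l (𝓝 d.z2) := by
    simpa only [← hz2] using ((h₂.sub h₁).mul_const (-I)).div_const 2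
  rw [nhds_induced, tendsto_comap_iff]
  exact t1.prodMk_nhds t2

lemma tendsto_P1_nhdsWithin_invertibleDiff (w₀ : Bicomplex) :
    Tendsto P1 (𝓝[invertibleDiff w₀] w₀) (𝓝[≠] (P1 w₀)) :=
  tendsto_nhdsWithin_of_tendsto_nhds_of_eventually_within _ continuous_P1.continuousWithinAt
    (eventually_nhdsWithin_of_forall fun _ hw => (mem_invertibleDiff_iff.1 hw).1)

lemma tendsto_P2_nhdsWithin_invertibleDiff (w₀ : Bicomplex) :
    Tendsto P2 (𝓝[invertibleDiff w₀] w₀) (𝓝[≠] (P2 w₀)) :=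
  tendsto_nhdsWithin_of_tendsto_nhds_of_eventually_within _ continuous_P2.continuousWithinAt
    (eventually_nhdsWithin_of_forall fun _ hw => (mem_invertibleDiff_iff.1 hw).2)

theorem hasTDerivAt_ofIdempotent {g₁ g₂ : ℂ → ℂ} {d₁ d₂ : ℂ} {w₀ : Bicomplex}
    (h₁ : HasDerivAt g₁ d₁ (P1 w₀)) (h₂ : HasDerivAt g₂ d₂ (P2 w₀)) :
    HasTDerivAt (fun w => ofIdempotent (g₁ (P1 w)) (g₂ (P2 w))) (ofIdempotent d₁ d₂) w₀ := by
  refine tendsto_of_tendsto_P1_P2 ?_ ?_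
  · rw [P1_ofIdempotent]
    refine ((hasDerivAt_iff_tendsto_slope.1 h₁).comp
      (tendsto_P1_nhdsWithin_invertibleDiff w₀)).congr' ?_
    filter_upwards [self_mem_nhdsWithin] with w hw
    rw [Function.comp_apply, slope_def_field, P1_sub_div_sub hw, P1_ofIdempotent,
      P1_ofIdempotent]
  · rw [P2_ofIdempotent]
    refine ((hasDerivAt_iff_tendsto_slope.1 h₂).comp
      (tendsto_P2_nhdsWithin_invertibleDiff w₀)).congr' ?_
    filter_upwards [self_mem_nhdsWithin] with w hw
    rw [Function.comp_apply, slope_def_field, P2_sub_div_sub hw, P2_ofIdempotent,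
      P2_ofIdempotent]

end Bicomplex

theorem tholomorphic_of_idempotent_components_general (X₁ X₂ : Set ℂ)
    (hX₁ : IsOpen X₁) (hX₂ : IsOpen X₂)
    (fe1 fe2 : ℂ → ℂ)
    (hfe1 : DifferentiableOn ℂ fe1 X₁) (hfe2 : DifferentiableOn ℂ fe2 X₂)
    (f : Bicomplex → Bicomplex)
    (hf : ∀ w : Bicomplex, f w = ofComplex (fe1 (P1 w)) * e1 + ofComplex (fe2 (P2 w)) * e2) :
    THolomorphicOn f (eProd X₁ X₂) ∧
    ∀ w ∈ eProd X₁ X₂,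
      HasTDerivAt f (ofComplex (deriv fe1 (P1 w)) * e1 + ofComplex (deriv fe2 (P2 w)) * e2) w := by
  obtain rfl : f = fun w => ofIdempotent (fe1 (P1 w)) (fe2 (P2 w)) := funext hf
  have hderiv : ∀ w ∈ eProd X₁ X₂,
      HasTDerivAt _ (ofIdempotent (deriv fe1 (P1 w)) (deriv fe2 (P2 w))) w := fun w hw =>
    hasTDerivAt_ofIdempotent (hfe1.differentiableAt (hX₁.mem_nhds hw.1)).hasDerivAt
      (hfe2.differentiableAt (hX₂.mem_nhds hw.2)).hasDerivAt
  exact ⟨fun w hw => ⟨_, hderiv w hw⟩, hderiv⟩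

/-- If `f_{e1}`, `f_{e2}` are holomorphic on domains `X₁`, `X₂` of `ℂ(i₁)`,
then `f(z₁ + z₂i₂) = f_{e1}(z₁ - z₂i₁)e₁ + f_{e2}(z₁ + z₂i₁)e₂` is `𝕋`-holomorphic on
`X₁ ×ₑ X₂` with `f′ = f′_{e1}(z₁ - z₂i₁)e₁ + f′_{e2}(z₁ + z₂i₁)e₂`. -/
theorem tholomorphic_of_idempotent_components (X₁ X₂ : Set ℂ)
    (hX₁ : IsOpen X₁) (hX₂ : IsOpen X₂) (hcX₁ : IsConnected X₁) (hcX₂ : IsConnected X₂)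
    (fe1 fe2 : ℂ → ℂ)
    (hfe1 : DifferentiableOn ℂ fe1 X₁) (hfe2 : DifferentiableOn ℂ fe2 X₂)
    (f : Bicomplex → Bicomplex)
    (hf : ∀ w : Bicomplex, f w = ofComplex (fe1 (P1 w)) * e1 + ofComplex (fe2 (P2 w)) * e2) :
    THolomorphicOn f (eProd X₁ X₂) ∧
    ∀ w ∈ eProd X₁ X₂,
      HasTDerivAt f (ofComplex (deriv fe1 (P1 w)) * e1 + ofComplex (deriv fe2 (P2 w)) * e2) w :=
  tholomorphic_of_idempotent_components_general X₁ X₂ hX₁ hX₂ fe1 fe2 hfe1 hfe2 f hf
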